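/- arXiv:2601.13952 — 7 statements merged into one kernel-verified Lean document; each statement's English description precedes it below -/
import Mathlib

section
/- Let n ≥ 1, let 1 ≤ a_1 < ⋯ < a_k ≤ n, let 1 ≤ i < j ≤ n, and let u ∈ S([n]^2) be the product of the k transpositions ((a_r,i),(a_r,j)) for r = 1,…,k. Then u is stable of rank 1 if and only if either {i,j} ⊆ {a_1,…,a_k} or {i,j} ∩ {a_1,…,a_k} = ∅. Moreover, for fixed k with 1 ≤ k ≤ n, the number of triples consisting of a k-element subset {a_1,…,a_k} of [n] and a 2-element subset {i,j} of [n] for which the resulting permutation u is stable of rank 1 equals C(n,k)·(C(n−k,2) + C(k,2)). -/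
/-- The permutation `u ⊗ 1` of `[n]³`, acting as `(x,y,z) ↦ (u(x,y), z)`. -/
def tensorOne {n : ℕ} (u : Equiv.Perm (Fin n × Fin n)) :
    Equiv.Perm (Fin n × Fin n × Fin n) :=
  (Equiv.prodAssoc (Fin n) (Fin n) (Fin n)).permCongr (u.prodCongr (Equiv.refl (Fin n)))

/-- The permutation `1 ⊗ u` of `[n]³`, acting as `(x,y,z) ↦ (x, u(y,z))`. -/
def oneTensor {n : ℕ} (u : Equiv.Perm (Fin n × Fin n)) :
    Equiv.Perm (Fin n × Fin n × Fin n) :=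
  (Equiv.refl (Fin n)).prodCongr u

/-- `u` is compatible with `v` if `(v ⊗ 1)(1 ⊗ u) = (1 ⊗ u)(v ⊗ 1)` in `S([n]³)`. -/
def Compatible {n : ℕ} (u v : Equiv.Perm (Fin n × Fin n)) : Prop :=
  tensorOne v * oneTensor u = oneTensor u * tensorOne v

/-- `u` is stable of rank 1: `(u ⊗ 1)(1 ⊗ u) = (1 ⊗ u)(u ⊗ 1)`. -/
def StableRank1 {n : ℕ} (u : Equiv.Perm (Fin n × Fin n)) : Prop :=
  Compatible u u

/-!
Writing `u (x, y) = (x, σ x y)`, where `σ x` is the transposition `(i j)` for `x ∈ A` and the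
identity otherwise, the two sides of the stability equation send `(x, y, z)` to
`(x, σ x y, σ y z)` and `(x, σ x y, σ (σ x y) z)`. So `u` is stable iff `σ (σ x y) = σ y` for all
`x, y`, i.e. iff `(i j)` preserves `A`, i.e. iff `i ∈ A ↔ j ∈ A`. For the count, each `k`-set `A`
admits `C(k, 2)` pairs inside it and `C(n - k, 2)` pairs outside it.
-/

open Finset

section Shear
variable {n : ℕ}

theorem stableRank1_prodShear_iff (σ : Fin n → Equiv.Perm (Fin n)) :
    StableRank1 (Equiv.prodShear (Equiv.refl _) σ) ↔ ∀ x y, σ (σ x y) = σ y := by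
  simp only [StableRank1, Compatible, Equiv.ext_iff, Prod.forall, Equiv.Perm.mul_apply,
    tensorOne, oneTensor, Equiv.permCongr_apply, Equiv.prodAssoc, Equiv.prodCongr_apply,
    Equiv.prodShear, Equiv.coe_fn_mk, Equiv.coe_fn_symm_mk, Equiv.coe_refl, Prod.map, id,
    Prod.mk.injEq, true_and]
  exact forall₃_congr fun _ _ _ => eq_comm

end Shear

section SwapOnRows
variable {n : ℕ}

/-- The product of the transpositions `((a, i), (a, j))` over `a ∈ A`. -/
def swapOnRows (A : Finset (Fin n)) (i j : Fin n) : Equiv.Perm (Fin n × Fin n) :=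
  Equiv.prodShear (Equiv.refl _) fun x => if x ∈ A then Equiv.swap i j else 1

theorem swapOnRows_apply (A : Finset (Fin n)) (i j : Fin n) (p : Fin n × Fin n) :
    swapOnRows A i j p = if p.1 ∈ A ∧ p.2 = i then (p.1, j)
      else if p.1 ∈ A ∧ p.2 = j then (p.1, i) else p := by
  obtain ⟨x, y⟩ := p
  by_cases hx : x ∈ A <;> by_cases hi : y = i <;> by_cases hj : y = j <;>
    simp_all [swapOnRows, Equiv.prodShear, Equiv.swap_apply_def]

theorem stableRank1_swapOnRows_iff (A : Finset (Fin n)) (i j : Fin n) :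
    StableRank1 (swapOnRows A i j) ↔ (i ∈ A ↔ j ∈ A) := by
  rw [swapOnRows, stableRank1_prodShear_iff]
  constructor
  · intro h
    have hi := congrArg (· i) (h i i)
    have hj := congrArg (· j) (h j j)
    by_cases hiA : i ∈ A <;> by_cases hjA : j ∈ A <;> simp_all
  · intro h x y
    by_cases hx : x ∈ A
    · have hswap_mem : Equiv.swap i j y ∈ A ↔ y ∈ A := by
        rcases eq_or_ne y i with rfl | hyi
        · simp [h]
        rcases eq_or_ne y j with rfl | hyj
        · simp [h]
        · rw [Equiv.swap_apply_of_ne_of_ne hyi hyj]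
      simp only [hx, if_true, hswap_mem]
    · simp [hx]

theorem pair_subset_or_disjoint_iff {α : Type*} [DecidableEq α] (A : Finset α) (i j : α) :
    ({i, j} ⊆ A ∨ Disjoint {i, j} A) ↔ (i ∈ A ↔ j ∈ A) := by
  simp only [insert_subset_iff, singleton_subset_iff, disjoint_insert_left,
    disjoint_singleton_left]
  tauto

end SwapOnRows

section Counting
variable {α : Type*} [Fintype α] [DecidableEq α]

theorem card_filter_subset_or_disjoint (A : Finset α) {m : ℕ} (hm : m ≠ 0) :
    #{B : Finset α | #B = m ∧ (B ⊆ A ∨ Disjoint B A)} =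
      (#A).choose m + (Fintype.card α - #A).choose m := by
  have hsplit : ({B : Finset α | #B = m ∧ (B ⊆ A ∨ Disjoint B A)} : Finset _) =
      powersetCard m A ∪ powersetCard m Aᶜ := by
    ext B
    simp only [mem_filter, mem_univ, true_and, mem_union, mem_powersetCard,
      subset_compl_iff_disjoint_right]
    tauto
  have hdisj : Disjoint (powersetCard m A) (powersetCard m Aᶜ) := by
    refine disjoint_left.mpr fun B hA hAc => ?_
    rw [mem_powersetCard] at hA hAc
    obtain ⟨x, hx⟩ := card_pos.mp (hA.2 ▸ Nat.pos_of_ne_zero hm)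
    exact mem_compl.mp (hAc.1 hx) (hA.1 hx)
  rw [hsplit, card_union_of_disjoint hdisj, card_powersetCard, card_powersetCard, card_compl]

theorem card_filter_prod_subset_or_disjoint (k : ℕ) {m : ℕ} (hm : m ≠ 0) :
    #{AB : Finset α × Finset α | #AB.1 = k ∧ #AB.2 = m ∧ (AB.2 ⊆ AB.1 ∨ Disjoint AB.2 AB.1)} =
      (Fintype.card α).choose k * ((Fintype.card α - k).choose m + k.choose m) := by
  have hrow (A : Finset α) : (∑ B : Finset α,
      if #A = k ∧ #B = m ∧ (B ⊆ A ∨ Disjoint B A) then 1 else 0) =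
      if #A = k then (Fintype.card α - k).choose m + k.choose m else 0 := by
    split_ifs with hA
    · simp only [hA, true_and, ← card_filter]
      rw [card_filter_subset_or_disjoint A hm, hA, add_comm]
    · simp [hA]
  rw [card_filter, Fintype.sum_prod_type]
  simp only [hrow]
  rw [← sum_filter, sum_const, ← powerset_univ, ← powersetCard_eq_filter, card_powersetCard,
    card_univ, smul_eq_mul]

end Counting

section Characterization
variable {n : ℕ}

theorem eq_swapOnRows_of_apply {A : Finset (Fin n)} {i j : Fin n} {u : Equiv.Perm (Fin n × Fin n)}
    (hu : ∀ p : Fin n × Fin n,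
      u p = if p.1 ∈ A ∧ p.2 = i then (p.1, j)
            else if p.1 ∈ A ∧ p.2 = j then (p.1, i) else p) :
    u = swapOnRows A i j :=
  Equiv.ext fun p => (hu p).trans (swapOnRows_apply A i j p).symm

theorem stableRank1_iff_of_apply {A : Finset (Fin n)} {i j : Fin n}
    {u : Equiv.Perm (Fin n × Fin n)}
    (hu : ∀ p : Fin n × Fin n,
      u p = if p.1 ∈ A ∧ p.2 = i then (p.1, j)
            else if p.1 ∈ A ∧ p.2 = j then (p.1, i) else p) :
    StableRank1 u ↔ ({i, j} ⊆ A ∨ Disjoint {i, j} A) := by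
  rw [eq_swapOnRows_of_apply hu, stableRank1_swapOnRows_iff, pair_subset_or_disjoint_iff]

theorem exists_stableRank1_iff {A B : Finset (Fin n)} (hB : #B = 2) :
    (∃ (i' j' : Fin n) (u' : Equiv.Perm (Fin n × Fin n)),
      i' ≠ j' ∧ B = {i', j'} ∧
      (∀ p : Fin n × Fin n,
        u' p = if p.1 ∈ A ∧ p.2 = i' then (p.1, j')
               else if p.1 ∈ A ∧ p.2 = j' then (p.1, i') else p) ∧
      StableRank1 u') ↔ (B ⊆ A ∨ Disjoint B A) := by
  constructor
  · rintro ⟨i', j', u', -, rfl, hu', hstable⟩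
    exact (stableRank1_iff_of_apply hu').mp hstable
  · intro hB'
    obtain ⟨i', j', hne, rfl⟩ := card_eq_two.mp hB
    exact ⟨i', j', swapOnRows A i' j', hne, rfl, swapOnRows_apply A i' j',
      (stableRank1_iff_of_apply (swapOnRows_apply A i' j')).mpr hB'⟩

end Characterization

theorem stmt_2_general (n k : ℕ) (A : Finset (Fin n)) (i j : Fin n)
    (u : Equiv.Perm (Fin n × Fin n))
    (hu : ∀ p : Fin n × Fin n,
      u p = if p.1 ∈ A ∧ p.2 = i then (p.1, j)
            else if p.1 ∈ A ∧ p.2 = j then (p.1, i) else p) :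
    (StableRank1 u ↔
      (({i, j} : Finset (Fin n)) ⊆ A ∨ Disjoint ({i, j} : Finset (Fin n)) A)) ∧
    Set.ncard {AB : Finset (Fin n) × Finset (Fin n) |
        AB.1.card = k ∧ AB.2.card = 2 ∧
        ∃ (i' j' : Fin n) (u' : Equiv.Perm (Fin n × Fin n)),
          i' ≠ j' ∧ AB.2 = {i', j'} ∧
          (∀ p : Fin n × Fin n,
            u' p = if p.1 ∈ AB.1 ∧ p.2 = i' then (p.1, j')
                   else if p.1 ∈ AB.1 ∧ p.2 = j' then (p.1, i') else p) ∧
          StableRank1 u'} =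
      n.choose k * ((n - k).choose 2 + k.choose 2) := by
  refine ⟨stableRank1_iff_of_apply hu, ?_⟩
  have hcount := card_filter_prod_subset_or_disjoint (α := Fin n) k two_ne_zero
  rw [Fintype.card_fin] at hcount
  rw [← hcount, ← Set.ncard_coe_finset]
  congr 1
  ext ⟨A, B⟩
  simp only [Set.mem_ofPred_eq, coe_filter, mem_univ, true_and]
  exact and_congr_right fun _ => and_congr_right exists_stableRank1_iff

theorem stmt_2 (n k : ℕ) (hn : 1 ≤ n) (hk1 : 1 ≤ k) (hk2 : k ≤ n)
    (A : Finset (Fin n)) (hA : A.Nonempty) (hAcard : A.card = k)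
    (i j : Fin n) (hij : i ≠ j)
    (u : Equiv.Perm (Fin n × Fin n))
    (hu : ∀ p : Fin n × Fin n,
      u p = if p.1 ∈ A ∧ p.2 = i then (p.1, j)
            else if p.1 ∈ A ∧ p.2 = j then (p.1, i) else p) :
    (StableRank1 u ↔
      (({i, j} : Finset (Fin n)) ⊆ A ∨ Disjoint ({i, j} : Finset (Fin n)) A)) ∧
    Set.ncard {AB : Finset (Fin n) × Finset (Fin n) |
        AB.1.card = k ∧ AB.2.card = 2 ∧
        ∃ (i' j' : Fin n) (u' : Equiv.Perm (Fin n × Fin n)),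
          i' ≠ j' ∧ AB.2 = {i', j'} ∧
          (∀ p : Fin n × Fin n,
            u' p = if p.1 ∈ AB.1 ∧ p.2 = i' then (p.1, j')
                   else if p.1 ∈ AB.1 ∧ p.2 = j' then (p.1, i') else p) ∧
          StableRank1 u'} =
      n.choose k * ((n - k).choose 2 + k.choose 2) :=
  stmt_2_general n k A i j u hu
end

section
/- Let n ≥ 1, let {a_1,a_2}, {i_1,j_1}, {i_2,j_2} be 2-element subsets of [n] with |{i_1,j_1} ∩ {i_2,j_2}| ≤ 1, let v ∈ S([n]^2), and let u ∈ S([n]^2) be the product of the two transpositions ((a_1,i_1),(a_1,j_1)) and ((a_2,i_2),(a_2,j_2)). Then u is compatible with v if and only if v maps [n] × {a_1} onto itself and [n] × {a_2} onto itself. -/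
/-!
The permutation `u` fixes the first coordinate and acts on the fibre `{y} × [n]` by a
permutation `σ y` of `[n]`: the swap of `i₁, j₁` over `a₁`, that of `i₂, j₂` over `a₂`, the
identity elsewhere. For such `u`, comparing `(v ⊗ 1)(1 ⊗ u)` and `(1 ⊗ u)(v ⊗ 1)` at `(x, y, z)`
shows that `u` is compatible with `v` iff `σ` is constant along `v` in the second coordinate,
`σ (v p).2 = σ p.2`. The intersection condition makes the three values of `σ` distinct, so this
says exactly that `v` preserves the second-coordinate fibres over `a₁` and over `a₂`.
-/

open Equiv

theorem compatible_prodCongrRight_iff {n : ℕ} (σ : Fin n → Perm (Fin n))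
    (v : Perm (Fin n × Fin n)) :
    Compatible (prodCongrRight σ) v ↔ ∀ p, σ (v p).2 = σ p.2 := by
  simp only [Compatible, Perm.ext_iff, Prod.forall, Perm.mul_apply, tensorOne, oneTensor]
  simp [Prod.ext_iff, eq_comm]

theorem swap_mul_swap_eq_prodCongrRight {α β : Type*} [DecidableEq α] [DecidableEq β]
    {a₁ a₂ : α} (ha : a₁ ≠ a₂) (i₁ j₁ i₂ j₂ : β) :
    swap (a₁, i₁) (a₁, j₁) * swap (a₂, i₂) (a₂, j₂) =
      prodCongrRight fun y => if y = a₁ then swap i₁ j₁ else if y = a₂ then swap i₂ j₂ else 1 := by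
  ext ⟨y, z⟩ <;> by_cases h₁ : y = a₁ <;> by_cases h₂ : y = a₂ <;>
    simp_all [swap_apply_def, Prod.ext_iff] <;> split_ifs <;> simp_all

theorem ite_ite_eq_ite_ite_iff {α β : Type*} [DecidableEq α] {a₁ a₂ : α} (ha : a₁ ≠ a₂)
    {f₁ f₂ f₀ : β} (h₁₂ : f₁ ≠ f₂) (h₁ : f₁ ≠ f₀) (h₂ : f₂ ≠ f₀) (b c : α) :
    ((if b = a₁ then f₁ else if b = a₂ then f₂ else f₀) =
        if c = a₁ then f₁ else if c = a₂ then f₂ else f₀) ↔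
      (b = a₁ ↔ c = a₁) ∧ (b = a₂ ↔ c = a₂) := by
  split_ifs <;> simp_all [Ne.symm ha, Ne.symm h₁₂, Ne.symm h₁, Ne.symm h₂]

theorem swap_ne_swap_of_card_inter_le_one {α : Type*} [DecidableEq α] [Fintype α]
    {i₁ j₁ i₂ j₂ : α} (h₁ : i₁ ≠ j₁) (h₂ : i₂ ≠ j₂)
    (hint : (({i₁, j₁} ∩ {i₂, j₂} : Finset α)).card ≤ 1) : swap i₁ j₁ ≠ swap i₂ j₂ := by
  intro h
  have := congrArg Perm.support h
  rw [Perm.support_swap h₁, Perm.support_swap h₂] at this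
  rw [this, Finset.inter_self, Finset.card_pair h₂] at hint
  omega

theorem Equiv.Perm.image_eq_self_iff {α : Type*} (v : Perm α) (S : Set α) :
    v '' S = S ↔ ∀ p, v p ∈ S ↔ p ∈ S := by
  rw [eq_comm, ← v.preimage_eq_iff_eq_image, Set.ext_iff]
  rfl

theorem stmt_3_general (n : ℕ) (a1 a2 i1 j1 i2 j2 : Fin n)
    (ha : a1 ≠ a2) (h1 : i1 ≠ j1) (h2 : i2 ≠ j2)
    (hint : (({i1, j1} ∩ {i2, j2} : Finset (Fin n))).card ≤ 1)
    (v : Equiv.Perm (Fin n × Fin n)) :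
    Compatible (Equiv.swap (a1, i1) (a1, j1) * Equiv.swap (a2, i2) (a2, j2)) v ↔
      (⇑v '' {p : Fin n × Fin n | p.2 = a1} = {p : Fin n × Fin n | p.2 = a1} ∧
       ⇑v '' {p : Fin n × Fin n | p.2 = a2} = {p : Fin n × Fin n | p.2 = a2}) := by
  have hσ := ite_ite_eq_ite_ite_iff ha (swap_ne_swap_of_card_inter_le_one h1 h2 hint)
    (swap_eq_one_iff.not.mpr h1) (swap_eq_one_iff.not.mpr h2)
  rw [swap_mul_swap_eq_prodCongrRight ha, compatible_prodCongrRight_iff,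
    Perm.image_eq_self_iff, Perm.image_eq_self_iff, ← forall_and]
  simp only [hσ, Set.mem_ofPred_eq]

theorem stmt_3 (n : ℕ) (hn : 1 ≤ n) (a1 a2 i1 j1 i2 j2 : Fin n)
    (ha : a1 ≠ a2) (h1 : i1 ≠ j1) (h2 : i2 ≠ j2)
    (hint : (({i1, j1} ∩ {i2, j2} : Finset (Fin n))).card ≤ 1)
    (v : Equiv.Perm (Fin n × Fin n)) :
    Compatible (Equiv.swap (a1, i1) (a1, j1) * Equiv.swap (a2, i2) (a2, j2)) v ↔
      (⇑v '' {p : Fin n × Fin n | p.2 = a1} = {p : Fin n × Fin n | p.2 = a1} ∧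
       ⇑v '' {p : Fin n × Fin n | p.2 = a2} = {p : Fin n × Fin n | p.2 = a2}) :=
  stmt_3_general n a1 a2 i1 j1 i2 j2 ha h1 h2 hint v
end

section
/- Let n ≥ 1, let (a_1,i_1), (a_1,j_1), (a_2,i_2), (a_2,j_2) be four distinct points of [n]² with a_1 ≠ a_2, and let u ∈ S([n]^2) be the product of the two transpositions ((a_1,i_1),(a_1,j_1)) and ((a_2,i_2),(a_2,j_2)). Then u is stable of rank 1 if and only if either {a_1,a_2} ∩ {i_1,j_1,i_2,j_2} = ∅ or {a_1,a_2} = {i_1,j_1,i_2,j_2}. Moreover, the number of such permutations u (i.e. products of two transpositions on four distinct points of [n]² of this form, taken over all choices of a_1 ≠ a_2 and column indices) that are stable of rank 1 equals C(n,2)·(C(n−2,2)² + 1). -/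
open Equiv Finset

section General

variable {α β γ M : Type*}

def rowPerm : (α → Perm β) →* Perm (α × β) where
  toFun σ := prodShear (Equiv.refl α) σ
  map_one' := rfl
  map_mul' _ _ := rfl

@[simp]
lemma rowPerm_apply (σ : α → Perm β) (p : α × β) : rowPerm σ p = (p.1, σ p.1 p.2) := rfl

lemma rowPerm_injective : Function.Injective (rowPerm (α := α) (β := β)) := by
  intro σ τ h
  funext x
  ext y
  simpa using congrArg (fun u => (u (x, y)).2) h

lemma swap_pair_eq_rowPerm [DecidableEq α] [DecidableEq β] (a : α) (i j : β) :
    swap (a, i) (a, j) = rowPerm (Pi.mulSingle a (swap i j)) := by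
  ext ⟨x, y⟩ <;> obtain rfl | hx := eq_or_ne x a <;> simp [swap_apply_def, *] <;> grind

lemma Finset.pair_eq_pair_iff [DecidableEq α] {x y z w : α} :
    ({x, y} : Finset α) = {z, w} ↔ x = z ∧ y = w ∨ x = w ∧ y = z := by
  rw [← Finset.coe_inj]
  push_cast
  exact Set.pair_eq_pair_iff

lemma Finset.pair_eq_pair_iff_of_lt [LinearOrder α] {x y z w : α} (hxy : x < y) (hzw : z < w) :
    ({x, y} : Finset α) = {z, w} ↔ x = z ∧ y = w := by
  rw [Finset.pair_eq_pair_iff]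
  constructor
  · rintro (h | ⟨rfl, rfl⟩)
    · exact h
    · exact (lt_asymm hxy hzw).elim
  · exact Or.inl

lemma Finset.eq_union_iff_of_card_eq [DecidableEq α] {s t u : Finset α} (ht : #t = #s)
    (hu : #u = #s) : s = t ∪ u ↔ t = s ∧ u = s := by
  refine ⟨fun h => ?_, fun ⟨hts, hus⟩ => by rw [hts, hus, union_self]⟩
  exact ⟨eq_of_subset_of_card_le (h ▸ subset_union_left) ht.ge,
    eq_of_subset_of_card_le (h ▸ subset_union_right) hu.ge⟩

lemma swap_eq_swap_iff [DecidableEq α] [Fintype α] {i j k l : α} (hij : i ≠ j) (hkl : k ≠ l) :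
    swap i j = swap k l ↔ ({i, j} : Finset α) = {k, l} := by
  refine ⟨fun h => by rw [← Perm.support_swap hij, ← Perm.support_swap hkl, h], fun h => ?_⟩
  rcases Finset.pair_eq_pair_iff.1 h with ⟨rfl, rfl⟩ | ⟨rfl, rfl⟩
  exacts [rfl, swap_comm _ _]

lemma forall_comp_swap_iff [DecidableEq α] (f : α → γ) (i j : α) :
    (∀ y, f (swap i j y) = f y) ↔ f i = f j := by
  refine ⟨fun h => by simpa using (h i).symm, fun h y => ?_⟩
  rcases eq_or_ne y i with rfl | hi
  · simp [h]
  rcases eq_or_ne y j with rfl | hj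
  · simp [h]
  · rw [swap_apply_of_ne_of_ne hi hj]

section TwoRows

variable [DecidableEq α] {a b : α}

lemma mulSingle_mul_mulSingle_apply_eq_one_iff [Monoid M] (hab : a ≠ b) {m₁ m₂ : M}
    (h₁ : m₁ ≠ 1) (h₂ : m₂ ≠ 1) (x : α) :
    (Pi.mulSingle a m₁ * Pi.mulSingle b m₂ : α → M) x = 1 ↔ x ∉ ({a, b} : Finset α) := by
  obtain rfl | hxa := eq_or_ne x a
  · simp [hab, h₁]
  obtain rfl | hxb := eq_or_ne x b
  · simp [hxa, h₂]
  · simp [hxa, hxb]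

lemma forall_comp_mulSingle_mul_mulSingle_iff (hab : a ≠ b) (τ₁ τ₂ : Perm β) (f : β → γ) :
    (∀ x y, f ((Pi.mulSingle a τ₁ * Pi.mulSingle b τ₂ : α → Perm β) x y) = f y) ↔
      (∀ y, f (τ₁ y) = f y) ∧ (∀ y, f (τ₂ y) = f y) := by
  refine ⟨fun h => ⟨by simpa [hab] using h a, by simpa [hab.symm] using h b⟩, ?_⟩
  rintro ⟨h₁, h₂⟩ x y
  obtain rfl | hxa := eq_or_ne x a
  · simpa [hab] using h₁ y
  obtain rfl | hxb := eq_or_ne x b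
  · simpa [hxa] using h₂ y
  · simp [hxa, hxb]

end TwoRows

def rowSwaps [DecidableEq α] [DecidableEq β] (r : α × α) (c : (β × β) × (β × β)) :
    Perm (α × β) :=
  swap (r.1, c.1.1) (r.1, c.1.2) * swap (r.2, c.2.1) (r.2, c.2.2)

lemma rowSwaps_eq_rowPerm [DecidableEq α] [DecidableEq β] (r : α × α) (c : (β × β) × (β × β)) :
    rowSwaps r c =
      rowPerm (Pi.mulSingle r.1 (swap c.1.1 c.1.2) * Pi.mulSingle r.2 (swap c.2.1 c.2.2)) := by
  rw [rowSwaps, swap_pair_eq_rowPerm, swap_pair_eq_rowPerm, map_mul]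

lemma rowSwaps_swap [DecidableEq α] [DecidableEq β] {r : α × α} (hr : r.1 ≠ r.2)
    (c : (β × β) × (β × β)) : rowSwaps r c = rowSwaps r.swap c.swap := by
  rw [rowSwaps_eq_rowPerm, rowSwaps_eq_rowPerm, (Pi.mulSingle_commute hr _ _).eq]
  rfl

section LinearOrder

variable [LinearOrder α]

def ltPairs (s : Finset α) : Finset (α × α) := {x ∈ s ×ˢ s | x.1 < x.2}

lemma mem_ltPairs {s : Finset α} {x : α × α} :
    x ∈ ltPairs s ↔ x.1 ∈ s ∧ x.2 ∈ s ∧ x.1 < x.2 := by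
  simp [ltPairs, and_assoc]

lemma card_ltPairs (s : Finset α) : #(ltPairs s) = (#s).choose 2 := card_product_filter_lt

lemma exists_mem_ltPairs_swap_eq [Fintype α] [DecidableEq β] (b : β) {i j : α} (h : i ≠ j) :
    ∃ p ∈ ltPairs univ, swap (b, i) (b, j) = swap (b, p.1) (b, p.2) := by
  rcases h.lt_or_gt with h | h
  · exact ⟨(i, j), mem_ltPairs.2 ⟨mem_univ _, mem_univ _, h⟩, rfl⟩
  · exact ⟨(j, i), mem_ltPairs.2 ⟨mem_univ _, mem_univ _, h⟩, swap_comm _ _⟩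

lemma eq_of_rowSwaps_eq [LinearOrder β] [Fintype β] {r r' : α × α}
    {c c' : (β × β) × (β × β)} (hr : r.1 < r.2) (hc₁ : c.1.1 < c.1.2) (hc₂ : c.2.1 < c.2.2)
    (hr' : r'.1 < r'.2) (hc₁' : c'.1.1 < c'.1.2) (hc₂' : c'.2.1 < c'.2.2)
    (h : rowSwaps r c = rowSwaps r' c') : r = r' ∧ c = c' := by
  rw [rowSwaps_eq_rowPerm, rowSwaps_eq_rowPerm] at h
  have hσ := rowPerm_injective h
  have hrows : ({r.1, r.2} : Finset α) = {r'.1, r'.2} := by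
    ext x
    rw [← not_iff_not,
      ← mulSingle_mul_mulSingle_apply_eq_one_iff hr.ne (swap_eq_one_iff.not.2 hc₁.ne)
        (swap_eq_one_iff.not.2 hc₂.ne),
      ← mulSingle_mul_mulSingle_apply_eq_one_iff hr'.ne (swap_eq_one_iff.not.2 hc₁'.ne)
        (swap_eq_one_iff.not.2 hc₂'.ne), hσ]
  obtain ⟨a, b⟩ := r
  obtain ⟨a', b'⟩ := r'
  obtain ⟨rfl, rfl⟩ := (Finset.pair_eq_pair_iff_of_lt hr hr').1 hrows
  have hcol₁ : swap c.1.1 c.1.2 = swap c'.1.1 c'.1.2 := by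
    simpa [hr.ne'] using congrFun hσ a
  have hcol₂ : swap c.2.1 c.2.2 = swap c'.2.1 c'.2.2 := by
    simpa [hr.ne] using congrFun hσ b
  rw [swap_eq_swap_iff hc₁.ne hc₁'.ne, Finset.pair_eq_pair_iff_of_lt hc₁ hc₁'] at hcol₁
  rw [swap_eq_swap_iff hc₂.ne hc₂'.ne, Finset.pair_eq_pair_iff_of_lt hc₂ hc₂'] at hcol₂
  exact ⟨rfl, Prod.ext (Prod.ext hcol₁.1 hcol₁.2) (Prod.ext hcol₂.1 hcol₂.2)⟩

end LinearOrder

end General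

section Stability

variable {n : ℕ}

lemma stableRank1_rowPerm_iff (σ : Fin n → Perm (Fin n)) :
    StableRank1 (rowPerm σ) ↔ ∀ x y, σ (σ x y) = σ y := by
  simp only [StableRank1, Compatible, Perm.ext_iff, Prod.forall]
  refine forall_congr' fun x => forall_congr' fun y => ?_
  simp [tensorOne, oneTensor, Perm.mul_apply, eq_comm]

lemma stableRank1_swap_mul_swap_iff {a b i₁ j₁ i₂ j₂ : Fin n} (hab : a ≠ b)
    (h₁ : i₁ ≠ j₁) (h₂ : i₂ ≠ j₂) :
    StableRank1 (swap (a, i₁) (a, j₁) * swap (b, i₂) (b, j₂)) ↔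
      (i₁ ∉ ({a, b} : Finset (Fin n)) ∧ j₁ ∉ ({a, b} : Finset (Fin n)) ∧
        i₂ ∉ ({a, b} : Finset (Fin n)) ∧ j₂ ∉ ({a, b} : Finset (Fin n))) ∨
      (({i₁, j₁} : Finset (Fin n)) = {a, b} ∧ ({i₂, j₂} : Finset (Fin n)) = {a, b}) := by
  set σ : Fin n → Perm (Fin n) := Pi.mulSingle a (swap i₁ j₁) * Pi.mulSingle b (swap i₂ j₂)
  have hne₁ : swap i₁ j₁ ≠ 1 := swap_eq_one_iff.not.2 h₁
  have hne₂ : swap i₂ j₂ ≠ 1 := swap_eq_one_iff.not.2 h₂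
  have hσ : ∀ y, σ y = 1 ↔ y ∉ ({a, b} : Finset (Fin n)) :=
    mulSingle_mul_mulSingle_apply_eq_one_iff hab hne₁ hne₂
  have hσa : σ a = swap i₁ j₁ := by simp [σ, hab]
  have hσb : σ b = swap i₂ j₂ := by simp [σ, hab.symm]
  have hswap := swap_eq_swap_iff h₁ h₂
  rw [swap_pair_eq_rowPerm, swap_pair_eq_rowPerm, ← map_mul, stableRank1_rowPerm_iff,
    forall_comp_mulSingle_mul_mulSingle_iff hab, forall_comp_swap_iff, forall_comp_swap_iff]
  simp only [mem_insert, mem_singleton, Finset.pair_eq_pair_iff] at hσ hswap ⊢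
  -- what is left is a case analysis on which of `i₁, j₁, i₂, j₂` equal `a` or `b`
  grind

lemma stableRank1_swap_mul_swap_iff_inter_eq_empty_or_eq {a b i₁ j₁ i₂ j₂ : Fin n}
    (hab : a ≠ b) (h₁ : i₁ ≠ j₁) (h₂ : i₂ ≠ j₂) :
    StableRank1 (swap (a, i₁) (a, j₁) * swap (b, i₂) (b, j₂)) ↔
      (({a, b} : Finset (Fin n)) ∩ {i₁, j₁, i₂, j₂} = ∅ ∨
        ({a, b} : Finset (Fin n)) = {i₁, j₁, i₂, j₂}) := by
  have hunion : ({i₁, j₁, i₂, j₂} : Finset (Fin n)) = {i₁, j₁} ∪ {i₂, j₂} := by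
    rw [insert_union, singleton_union]
  rw [stableRank1_swap_mul_swap_iff hab h₁ h₂, ← disjoint_iff_inter_eq_empty, hunion,
    Finset.eq_union_iff_of_card_eq ((card_pair h₁).trans (card_pair hab).symm)
      ((card_pair h₂).trans (card_pair hab).symm)]
  simp only [disjoint_union_right, disjoint_insert_right, disjoint_singleton_right, and_assoc]

end Stability

section Counting

variable {n : ℕ}

instance : DecidablePred (StableRank1 (n := n)) := fun u =>
  inferInstanceAs (Decidable (tensorOne u * oneTensor u = oneTensor u * tensorOne u))

lemma filter_stableRank1_rowSwaps {r : Fin n × Fin n} (hr : r.1 < r.2) :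
    {c ∈ ltPairs (univ : Finset (Fin n)) ×ˢ ltPairs (univ : Finset (Fin n)) |
      StableRank1 (rowSwaps r c)} =
      ltPairs ({r.1, r.2} : Finset (Fin n))ᶜ ×ˢ ltPairs {r.1, r.2}ᶜ ∪ {(r, r)} := by
  obtain ⟨a, b⟩ := r
  dsimp only at hr
  ext ⟨⟨i₁, j₁⟩, ⟨i₂, j₂⟩⟩
  simp only [mem_filter, mem_product, mem_ltPairs, mem_union, mem_singleton, mem_univ,
    mem_compl, true_and, Prod.mk.injEq]
  constructor
  · rintro ⟨⟨h₁, h₂⟩, hs⟩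
    rw [rowSwaps, stableRank1_swap_mul_swap_iff hr.ne h₁.ne h₂.ne,
      Finset.pair_eq_pair_iff_of_lt h₁ hr, Finset.pair_eq_pair_iff_of_lt h₂ hr] at hs
    tauto
  · rintro (⟨⟨hi₁, hj₁, h₁⟩, hi₂, hj₂, h₂⟩ | ⟨⟨rfl, rfl⟩, rfl, rfl⟩)
    · refine ⟨⟨h₁, h₂⟩, ?_⟩
      rw [rowSwaps, stableRank1_swap_mul_swap_iff hr.ne h₁.ne h₂.ne]
      exact Or.inl ⟨hi₁, hj₁, hi₂, hj₂⟩
    · refine ⟨⟨hr, hr⟩, ?_⟩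
      rw [rowSwaps, stableRank1_swap_mul_swap_iff hr.ne hr.ne hr.ne]
      exact Or.inr ⟨rfl, rfl⟩

lemma card_filter_stableRank1_rowSwaps {r : Fin n × Fin n} (hr : r.1 < r.2) :
    #{c ∈ ltPairs (univ : Finset (Fin n)) ×ˢ ltPairs (univ : Finset (Fin n)) |
      StableRank1 (rowSwaps r c)} = (n - 2).choose 2 ^ 2 + 1 := by
  have hdisj : Disjoint (ltPairs ({r.1, r.2} : Finset (Fin n))ᶜ ×ˢ ltPairs {r.1, r.2}ᶜ)
      {(r, r)} := by
    simp [mem_ltPairs]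
  rw [filter_stableRank1_rowSwaps hr, card_union_of_disjoint hdisj, card_product, card_ltPairs,
    card_compl, card_pair hr.ne, Fintype.card_fin, card_singleton, sq]

/-- Rows and columns of each transposition are listed in increasing order, so that every stable
product of two row transpositions has exactly one parameter. -/
def stableParams (n : ℕ) : Finset (Σ _ : Fin n × Fin n, (Fin n × Fin n) × (Fin n × Fin n)) :=
  (ltPairs univ).sigma fun r => {c ∈ ltPairs univ ×ˢ ltPairs univ | StableRank1 (rowSwaps r c)}

lemma card_stableParams : #(stableParams n) = n.choose 2 * ((n - 2).choose 2 ^ 2 + 1) := by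
  rw [stableParams, card_sigma,
    sum_congr rfl fun r hr => card_filter_stableRank1_rowSwaps (mem_ltPairs.1 hr).2.2, sum_const,
    card_ltPairs, card_univ, Fintype.card_fin, smul_eq_mul]

lemma setOf_stableRank1_eq_image :
    {u : Perm (Fin n × Fin n) | ∃ b₁ b₂ k₁ l₁ k₂ l₂ : Fin n, b₁ ≠ b₂ ∧
        List.Pairwise (· ≠ ·) [((b₁, k₁) : Fin n × Fin n), (b₁, l₁), (b₂, k₂), (b₂, l₂)] ∧
        u = swap (b₁, k₁) (b₁, l₁) * swap (b₂, k₂) (b₂, l₂) ∧ StableRank1 u} =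
      ((stableParams n).image fun x => rowSwaps x.1 x.2 : Set (Perm (Fin n × Fin n))) := by
  ext u
  simp only [Set.mem_ofPred_eq, coe_image, Set.mem_image, mem_coe, stableParams, mem_sigma,
    mem_filter, mem_product, Sigma.exists]
  constructor
  · rintro ⟨b₁, b₂, k₁, l₁, k₂, l₂, hb, hnodup, rfl, hu⟩
    obtain ⟨hk, hl⟩ : k₁ ≠ l₁ ∧ k₂ ≠ l₂ := by simpa [hb] using hnodup
    obtain ⟨p₁, hp₁, e₁⟩ := exists_mem_ltPairs_swap_eq b₁ hk
    obtain ⟨p₂, hp₂, e₂⟩ := exists_mem_ltPairs_swap_eq b₂ hl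
    rw [e₁, e₂] at hu ⊢
    change StableRank1 (rowSwaps (b₁, b₂) (p₁, p₂)) at hu
    change ∃ r c, _ ∧ rowSwaps r c = rowSwaps (b₁, b₂) (p₁, p₂)
    rcases hb.lt_or_gt with hb | hb
    · exact ⟨(b₁, b₂), (p₁, p₂), ⟨mem_ltPairs.2 ⟨mem_univ _, mem_univ _, hb⟩, ⟨hp₁, hp₂⟩, hu⟩, rfl⟩
    · rw [rowSwaps_swap hb.ne'] at hu ⊢
      exact ⟨(b₂, b₁), (p₂, p₁), ⟨mem_ltPairs.2 ⟨mem_univ _, mem_univ _, hb⟩, ⟨hp₂, hp₁⟩, hu⟩, rfl⟩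
  · rintro ⟨r, c, ⟨hr, ⟨hc₁, hc₂⟩, hu⟩, rfl⟩
    rw [mem_ltPairs] at hr hc₁ hc₂
    exact ⟨r.1, r.2, c.1.1, c.1.2, c.2.1, c.2.2, hr.2.2.ne,
      by simp [hr.2.2.ne, hc₁.2.2.ne, hc₂.2.2.ne], rfl, hu⟩

lemma injOn_stableParams :
    Set.InjOn (fun x : Σ _ : Fin n × Fin n, (Fin n × Fin n) × (Fin n × Fin n) => rowSwaps x.1 x.2)
      (stableParams n) := by
  rintro ⟨r, c⟩ hx ⟨r', c'⟩ hx' h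
  simp only [stableParams, mem_coe, mem_sigma, mem_filter, mem_product, mem_ltPairs] at hx hx'
  obtain ⟨rfl, rfl⟩ := eq_of_rowSwaps_eq hx.1.2.2 hx.2.1.1.2.2 hx.2.1.2.2.2
    hx'.1.2.2 hx'.2.1.1.2.2 hx'.2.1.2.2.2 h
  rfl

end Counting

theorem stmt_5_general (n : ℕ) (a1 a2 i1 j1 i2 j2 : Fin n)
    (ha : a1 ≠ a2)
    (hdist : List.Pairwise (· ≠ ·)
      [((a1, i1) : Fin n × Fin n), (a1, j1), (a2, i2), (a2, j2)]) :
    (StableRank1 (Equiv.swap (a1, i1) (a1, j1) * Equiv.swap (a2, i2) (a2, j2)) ↔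
      (({a1, a2} : Finset (Fin n)) ∩ {i1, j1, i2, j2} = ∅ ∨
       ({a1, a2} : Finset (Fin n)) = {i1, j1, i2, j2})) ∧
    Set.ncard {u : Equiv.Perm (Fin n × Fin n) |
        ∃ b1 b2 k1 l1 k2 l2 : Fin n,
          b1 ≠ b2 ∧
          List.Pairwise (· ≠ ·)
            [((b1, k1) : Fin n × Fin n), (b1, l1), (b2, k2), (b2, l2)] ∧
          u = Equiv.swap (b1, k1) (b1, l1) * Equiv.swap (b2, k2) (b2, l2) ∧
          StableRank1 u} =
      n.choose 2 * ((n - 2).choose 2 ^ 2 + 1) := by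
  obtain ⟨h1, h2⟩ : i1 ≠ j1 ∧ i2 ≠ j2 := by simpa [ha] using hdist
  refine ⟨stableRank1_swap_mul_swap_iff_inter_eq_empty_or_eq ha h1 h2, ?_⟩
  rw [setOf_stableRank1_eq_image, Set.ncard_coe_finset, card_image_of_injOn injOn_stableParams,
    card_stableParams]

theorem stmt_5 (n : ℕ) (hn : 1 ≤ n) (a1 a2 i1 j1 i2 j2 : Fin n)
    (ha : a1 ≠ a2)
    (hdist : List.Pairwise (· ≠ ·)
      [((a1, i1) : Fin n × Fin n), (a1, j1), (a2, i2), (a2, j2)]) :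
    (StableRank1 (Equiv.swap (a1, i1) (a1, j1) * Equiv.swap (a2, i2) (a2, j2)) ↔
      (({a1, a2} : Finset (Fin n)) ∩ {i1, j1, i2, j2} = ∅ ∨
       ({a1, a2} : Finset (Fin n)) = {i1, j1, i2, j2})) ∧
    Set.ncard {u : Equiv.Perm (Fin n × Fin n) |
        ∃ b1 b2 k1 l1 k2 l2 : Fin n,
          b1 ≠ b2 ∧
          List.Pairwise (· ≠ ·)
            [((b1, k1) : Fin n × Fin n), (b1, l1), (b2, k2), (b2, l2)] ∧
          u = Equiv.swap (b1, k1) (b1, l1) * Equiv.swap (b2, k2) (b2, l2) ∧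
          StableRank1 u} =
      n.choose 2 * ((n - 2).choose 2 ^ 2 + 1) :=
  stmt_5_general n a1 a2 i1 j1 i2 j2 ha hdist
end

section
/- Let n ≥ 1 and let u, v ∈ S([n]^2). Then u and v are bicompatible if and only if the antitransposed permutations ᵃu and ᵃv are bicompatible, where for w ∈ S([n]^2) the antitransposed permutation ᵃw ∈ S([n]^2) is defined by ᵃw(x,y) = (n+1 − w_2(n+1−y, n+1−x), n+1 − w_1(n+1−y, n+1−x)), writing w(p,q) = (w_1(p,q), w_2(p,q)). -/
/-- `u` and `v` are bicompatible. -/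
def Bicompatible {n : ℕ} (u v : Equiv.Perm (Fin n × Fin n)) : Prop :=
  Compatible u v ∧ Compatible v u

/-- The order-reversing involution `(x, y) ↦ (n+1-y, n+1-x)` of `[n]²`
(written with `Fin.rev` in the 0-indexed setting). -/
def antiDiag (n : ℕ) : Equiv.Perm (Fin n × Fin n) :=
  Function.Involutive.toPerm (fun p => (p.2.rev, p.1.rev)) (fun p => by simp)

/-- The antitransposed permutation
`ᵃw(x,y) = (n+1 − w₂(n+1−y, n+1−x), n+1 − w₁(n+1−y, n+1−x))`. -/
def antitr {n : ℕ} (w : Equiv.Perm (Fin n × Fin n)) : Equiv.Perm (Fin n × Fin n) :=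
  ((antiDiag n).trans w).trans (antiDiag n)

def reverse3 (n : ℕ) : Equiv.Perm (Fin n × Fin n × Fin n) :=
  Function.Involutive.toPerm (fun p => (p.2.2.rev, p.2.1.rev, p.1.rev)) (fun p => by simp)

lemma tensorOne_antitr {n : ℕ} (w : Equiv.Perm (Fin n × Fin n)) :
    tensorOne (antitr w) = MulAut.conj (reverse3 n) (oneTensor w) := by
  ext p <;> simp [tensorOne, oneTensor, antitr, antiDiag, reverse3, Function.Involutive.toPerm,
    Equiv.permCongr]

lemma oneTensor_antitr {n : ℕ} (w : Equiv.Perm (Fin n × Fin n)) :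
    oneTensor (antitr w) = MulAut.conj (reverse3 n) (tensorOne w) := by
  ext p <;> simp [tensorOne, oneTensor, antitr, antiDiag, reverse3, Function.Involutive.toPerm,
    Equiv.permCongr]

-- Conjugating by the reversal of `[n]³` swaps the two tensor factors, hence the roles of `u` and `v`.
lemma compatible_antitr_iff {n : ℕ} (u v : Equiv.Perm (Fin n × Fin n)) :
    Compatible (antitr u) (antitr v) ↔ Compatible v u := by
  rw [Compatible, Compatible, tensorOne_antitr, oneTensor_antitr, ← map_mul, ← map_mul,
    (MulAut.conj (reverse3 n)).injective.eq_iff, eq_comm]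

theorem stmt_8_general (n : ℕ) (u v : Equiv.Perm (Fin n × Fin n)) :
    Bicompatible u v ↔ Bicompatible (antitr u) (antitr v) := by
  rw [Bicompatible, Bicompatible, compatible_antitr_iff, compatible_antitr_iff, and_comm]

theorem stmt_8 (n : ℕ) (hn : 1 ≤ n) (u v : Equiv.Perm (Fin n × Fin n)) :
    Bicompatible u v ↔ Bicompatible (antitr u) (antitr v) :=
  stmt_8_general n u v
end

section
/- Let n ≥ 1 and let P ⊆ [n]. Define R_P ≤ S([n]^2) as the set of u ∈ S([n]^2) such that (1) u({k} × ([n]∖P)) = {k} × ([n]∖P) for each k ∈ P, and (2) u(k,j) = (k,j) whenever k ∈ [n]∖P or j ∈ P. Define Ř_P ≤ S([n]^2) as the set of u ∈ S([n]^2) for which (1) there exists σ ∈ S([n]∖P) with u(k,j) = (k, σ(j)) for all k,j ∈ [n]∖P, and (2) u(k,j) = (k,j) whenever k ∈ P or j ∈ P. Then the subgroup of S([n]^2) generated by Ř_P ∪ R_P is a bicompatible subgroup, and it is isomorphic to the direct product of |P|+1 copies of the symmetric group S_{n−|P|}. -/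
/-- The subgroup-membership condition defining `R_P`: `u` leaves each set
`{k} × ([n] ∖ P)` (for `k ∈ P`) invariant, and fixes `(k,j)` whenever
`k ∉ P` or `j ∈ P`. -/
def memRP {n : ℕ} (P : Finset (Fin n)) (u : Equiv.Perm (Fin n × Fin n)) : Prop :=
  (∀ k ∈ P, ⇑u '' {p : Fin n × Fin n | p.1 = k ∧ p.2 ∉ P} =
      {p : Fin n × Fin n | p.1 = k ∧ p.2 ∉ P}) ∧
  ∀ p : Fin n × Fin n, (p.1 ∉ P ∨ p.2 ∈ P) → u p = p

/-- The subgroup-membership condition defining `Ř_P`: there is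
`σ ∈ S([n] ∖ P)` with `u(k,j) = (k, σ(j))` for `k, j ∉ P`, and `u` fixes
`(k,j)` whenever `k ∈ P` or `j ∈ P`. -/
def memCheckRP {n : ℕ} (P : Finset (Fin n)) (u : Equiv.Perm (Fin n × Fin n)) : Prop :=
  (∃ σ : Equiv.Perm {x : Fin n // x ∉ P},
    ∀ (k j : Fin n) (hk : k ∉ P) (hj : j ∉ P), u (k, j) = (k, (σ ⟨j, hj⟩).val)) ∧
  ∀ p : Fin n × Fin n, (p.1 ∈ P ∨ p.2 ∈ P) → u p = p


/-! Both `R_P` and `Ř_P` consist of fibrewise permutations `(k, j) ↦ (k, f_k j)` in which every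
`f_k` fixes `P` pointwise: for `R_P` only the `f_k` with `k ∈ P` may be nontrivial, for `Ř_P` only
the common value of the `f_k` with `k ∉ P`. Hence the generated group is the image of an injective
homomorphism from `S([n] ∖ P) ^ (P ⊔ {∗})`, with one factor per fibre over a point of `P` and one
factor acting simultaneously on all fibres over `[n] ∖ P`.

For two such permutations `u = (f_k)` and `v = (g_k)`, both `(v ⊗ 1)(1 ⊗ u)` and `(1 ⊗ u)(v ⊗ 1)`
send `(x, y, z)` to `(x, g_x y, ·)`, with last coordinates `f_y z` and `f_{g_x y} z`. These agree:
if `y ∈ P` then `g_x y = y`, and otherwise `g_x y ∉ P` too, where `f` is constant. -/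

namespace BicompatibleRP

open Equiv Equiv.Perm

section FiberPerm

variable {α β : Type*}

def fiberPerm (u : Perm (α × β)) (hu : ∀ p, (u p).1 = p.1) (a : α) : Perm β where
  toFun b := (u (a, b)).2
  invFun b := (u.symm (a, b)).2
  left_inv b := by
    simp only
    rw [show (a, (u (a, b)).2) = u (a, b) from Prod.ext (hu (a, b)).symm rfl, symm_apply_apply]
  right_inv b := by
    have hsymm : (u.symm (a, b)).1 = a := by simpa using (hu (u.symm (a, b))).symm
    simp only
    rw [show (a, (u.symm (a, b)).2) = u.symm (a, b) from Prod.ext hsymm.symm rfl,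
      apply_symm_apply]

@[simp]
theorem fiberPerm_apply (u : Perm (α × β)) (hu : ∀ p, (u p).1 = p.1) (a : α) (b : β) :
    fiberPerm u hu a b = (u (a, b)).2 :=
  rfl

theorem apply_eq_fiberPerm (u : Perm (α × β)) (hu : ∀ p, (u p).1 = p.1) (a : α) (b : β) :
    u (a, b) = (a, fiberPerm u hu a b) :=
  Prod.ext (hu _) rfl

end FiberPerm

theorem apply_iff_of_forall_fixed {α : Type*} {f : Perm α} {p : α → Prop}
    (hf : ∀ x, p x → f x = x) (x : α) : p (f x) ↔ p x :=
  ⟨fun h => f.injective (hf _ h) ▸ h, fun h => (hf x h).symm ▸ h⟩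

variable {n : ℕ} (P : Finset (Fin n))

-- `Option P` stands for `P ⊔ {∗}`; all fibres over `[n] ∖ P` share the index `none`.
def fiberIndex (k : Fin n) : Option P :=
  if h : k ∈ P then some ⟨k, h⟩ else none

theorem fiberIndex_of_mem {k : Fin n} (hk : k ∈ P) : fiberIndex P k = some ⟨k, hk⟩ :=
  dif_pos hk

theorem fiberIndex_of_not_mem {k : Fin n} (hk : k ∉ P) : fiberIndex P k = none :=
  dif_neg hk

theorem ofSubtype_apply_of_mem_of_compl (σ : Perm {x // x ∉ P}) {j : Fin n} (hj : j ∈ P) :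
    ofSubtype σ j = j :=
  ofSubtype_apply_of_not_mem σ (not_not_intro hj)

theorem ofSubtype_apply_mem_iff_of_compl (σ : Perm {x // x ∉ P}) (j : Fin n) :
    ofSubtype σ j ∈ P ↔ j ∈ P :=
  not_iff_not.mp (ofSubtype_apply_mem_iff_mem σ j)

theorem fiberIndex_ofSubtype (σ : Perm {x // x ∉ P}) (k : Fin n) :
    fiberIndex P (ofSubtype σ k) = fiberIndex P k := by
  by_cases hk : k ∈ P
  · rw [ofSubtype_apply_of_mem_of_compl P σ hk]
  · have hσk : ofSubtype σ k ∉ P := (ofSubtype_apply_mem_iff_of_compl P σ k).not.mpr hk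
    rw [fiberIndex_of_not_mem P hk, fiberIndex_of_not_mem P hσk]

def fiberwise : (Option P → Perm {x // x ∉ P}) →* Perm (Fin n × Fin n) where
  toFun g := prodCongrRight fun k => ofSubtype (g (fiberIndex P k))
  map_one' := by ext <;> simp
  map_mul' g h := by ext <;> simp [Perm.mul_apply]

theorem fiberwise_apply (g : Option P → Perm {x // x ∉ P}) (k j : Fin n) :
    fiberwise P g (k, j) = (k, ofSubtype (g (fiberIndex P k)) j) :=
  rfl

theorem fiberwise_injective : Function.Injective (fiberwise P) := by
  intro g h hgh
  have key : ∀ k j, ofSubtype (g (fiberIndex P k)) j = ofSubtype (h (fiberIndex P k)) j :=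
    fun k j => by simpa [fiberwise_apply] using congrArg (· (k, j)) hgh
  funext o
  refine Equiv.ext fun x => Subtype.ext ?_
  cases o with
  | none => simpa [fiberIndex_of_not_mem P x.2] using key x x
  | some k => simpa [fiberIndex_of_mem P k.2] using key k x

theorem compatible_fiberwise (g h : Option P → Perm {x // x ∉ P}) :
    Compatible (fiberwise P g) (fiberwise P h) := by
  ext ⟨x, y, z⟩ <;>
    simp [tensorOne, oneTensor, fiberwise_apply, Perm.mul_apply, fiberIndex_ofSubtype]

theorem memRP_fiberwise {g : Option P → Perm {x // x ∉ P}} (hg : g none = 1) :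
    memRP P (fiberwise P g) := by
  refine ⟨fun k _ => ?_, fun ⟨k, j⟩ hkj => ?_⟩
  · rw [Equiv.image_eq_preimage_symm, ← Perm.inv_def, ← map_inv]
    ext ⟨k', j'⟩
    rw [Set.mem_preimage, fiberwise_apply]
    simp only [Set.mem_ofPred_eq, ofSubtype_apply_mem_iff_of_compl]
  · rw [fiberwise_apply]
    rcases hkj with hk | hj
    · simp [fiberIndex_of_not_mem P hk, hg]
    · rw [ofSubtype_apply_of_mem_of_compl P _ hj]

theorem memCheckRP_fiberwise_mulSingle (σ : Perm {x // x ∉ P}) :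
    memCheckRP P (fiberwise P (Pi.mulSingle none σ)) := by
  refine ⟨⟨σ, fun k j hk hj => ?_⟩, fun ⟨k, j⟩ hkj => ?_⟩
  · rw [fiberwise_apply, fiberIndex_of_not_mem P hk, Pi.mulSingle_eq_same,
      ofSubtype_apply_of_mem σ hj]
  · rw [fiberwise_apply]
    rcases hkj with hk | hj
    · simp [fiberIndex_of_mem P hk]
    · rw [ofSubtype_apply_of_mem_of_compl P _ hj]

theorem fst_apply_of_memRP {u : Perm (Fin n × Fin n)} (hu : memRP P u) (p : Fin n × Fin n) :
    (u p).1 = p.1 := by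
  obtain ⟨k, j⟩ := p
  by_cases h : k ∉ P ∨ j ∈ P
  · rw [hu.2 _ h]
  · push Not at h
    have : u (k, j) ∈ u '' {p | p.1 = k ∧ p.2 ∉ P} := ⟨_, ⟨rfl, h.2⟩, rfl⟩
    rw [hu.1 k h.1] at this
    exact this.1

theorem mem_range_fiberwise_of_memCheckRP {u : Perm (Fin n × Fin n)} (hu : memCheckRP P u) :
    u ∈ (fiberwise P).range := by
  obtain ⟨⟨σ, hσ⟩, hfix⟩ := hu
  refine ⟨Pi.mulSingle none σ, Equiv.ext fun ⟨k, j⟩ => ?_⟩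
  rw [fiberwise_apply]
  by_cases hk : k ∈ P
  · simp [fiberIndex_of_mem P hk, hfix (k, j) (Or.inl hk)]
  by_cases hj : j ∈ P
  · rw [ofSubtype_apply_of_mem_of_compl P _ hj, hfix (k, j) (Or.inr hj)]
  · rw [fiberIndex_of_not_mem P hk, Pi.mulSingle_eq_same, ofSubtype_apply_of_mem σ hj,
      hσ k j hk hj]

theorem mem_range_fiberwise_of_memRP {u : Perm (Fin n × Fin n)} (hu : memRP P u) :
    u ∈ (fiberwise P).range := by
  set f := fiberPerm u (fst_apply_of_memRP P hu)
  have hfix : ∀ k j, j ∈ P → f k j = j := fun k j hj =>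
    congrArg Prod.snd (hu.2 (k, j) (Or.inr hj))
  have hcompl : ∀ k j, f k j ∉ P ↔ j ∉ P := fun k j =>
    not_congr (apply_iff_of_forall_fixed (hfix k) j)
  have hf : ∀ k, ofSubtype ((f k).subtypePerm (p := (· ∉ P)) (hcompl k)) = f k := fun k =>
    ofSubtype_subtypePerm (hcompl k) fun j hj hjP => hj (hfix k j hjP)
  refine ⟨fun o => o.elim 1 fun k => (f k).subtypePerm (hcompl k), Equiv.ext fun ⟨k, j⟩ => ?_⟩
  rw [fiberwise_apply, apply_eq_fiberPerm u (fst_apply_of_memRP P hu)]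
  by_cases hk : k ∈ P
  · rw [fiberIndex_of_mem P hk, Option.elim_some]
    exact congrArg (Prod.mk k) (DFunLike.congr_fun (hf k) j)
  · simp [fiberIndex_of_not_mem P hk, f, hu.2 (k, j) (Or.inl hk)]

theorem range_fiberwise_eq_closure :
    (fiberwise P).range = Subgroup.closure {u | memCheckRP P u ∨ memRP P u} := by
  refine le_antisymm ?_ ((Subgroup.closure_le _).mpr ?_)
  · rintro _ ⟨g, rfl⟩
    have hsplit : g = Function.update g none 1 * Pi.mulSingle none (g none) := by
      ext1 o; cases o <;> simp
    rw [hsplit, map_mul]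
    exact mul_mem (Subgroup.subset_closure (Or.inr (memRP_fiberwise P (Function.update_self ..))))
      (Subgroup.subset_closure (Or.inl (memCheckRP_fiberwise_mulSingle P _)))
  · rintro u (hu | hu)
    exacts [mem_range_fiberwise_of_memCheckRP P hu, mem_range_fiberwise_of_memRP P hu]

end BicompatibleRP

theorem stmt_9_general (n : ℕ) (P : Finset (Fin n)) :
    (∀ u ∈ Subgroup.closure {u | memCheckRP P u ∨ memRP P u},
      ∀ v ∈ Subgroup.closure {u | memCheckRP P u ∨ memRP P u},
        Compatible u v ∧ Compatible v u) ∧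
    Nonempty
      ((Subgroup.closure {u | memCheckRP P u ∨ memRP P u} :
          Subgroup (Equiv.Perm (Fin n × Fin n))) ≃*
        (Fin (P.card + 1) → Equiv.Perm (Fin (n - P.card)))) := by
  open BicompatibleRP in
  rw [← range_fiberwise_eq_closure]
  refine ⟨?_, ⟨(MonoidHom.ofInjective (fiberwise_injective P)).symm.trans
    (MulEquiv.arrowCongr (Fintype.equivFinOfCardEq (by simp))
      (Equiv.permCongrHom (Fintype.equivFinOfCardEq (by simp [Fintype.card_subtype_compl]))))⟩⟩
  rintro _ ⟨g, rfl⟩ _ ⟨h, rfl⟩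
  exact ⟨compatible_fiberwise P g h, compatible_fiberwise P h g⟩

theorem stmt_9 (n : ℕ) (hn : 1 ≤ n) (P : Finset (Fin n)) :
    (∀ u ∈ Subgroup.closure {u | memCheckRP P u ∨ memRP P u},
      ∀ v ∈ Subgroup.closure {u | memCheckRP P u ∨ memRP P u},
        Compatible u v ∧ Compatible v u) ∧
    Nonempty
      ((Subgroup.closure {u | memCheckRP P u ∨ memRP P u} :
          Subgroup (Equiv.Perm (Fin n × Fin n))) ≃*
        (Fin (P.card + 1) → Equiv.Perm (Fin (n - P.card)))) :=
  stmt_9_general n P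
end

section
/- Let n ≥ 1, let i, j ∈ [n] with i ≠ j, let u ∈ R_{i,j} and v ∈ R_{j,i}. Then u and v are bicompatible. Here, for k ∈ [n], R_k ≤ S([n]^2) is the set of permutations u with u({k} × ([n]∖{k})) = {k} × ([n]∖{k}) and u(x,y) = (x,y) whenever x ≠ k or y = k, and R_{k,ℓ} := {u ∈ R_k : u(k,ℓ) = (k,ℓ)}. -/
/-- Membership in `R_k`: `u` leaves `{k} × ([n] ∖ {k})` invariant and fixes
`(x,y)` whenever `x ≠ k` or `y = k`. -/
def memR {n : ℕ} (k : Fin n) (u : Equiv.Perm (Fin n × Fin n)) : Prop :=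
  (⇑u '' {p : Fin n × Fin n | p.1 = k ∧ p.2 ≠ k} =
      {p : Fin n × Fin n | p.1 = k ∧ p.2 ≠ k}) ∧
  ∀ p : Fin n × Fin n, (p.1 ≠ k ∨ p.2 = k) → u p = p

/-- Membership in `R_{k,ℓ}`. -/
def memRij {n : ℕ} (k l : Fin n) (u : Equiv.Perm (Fin n × Fin n)) : Prop :=
  memR k u ∧ u (k, l) = (k, l)

/-!
Pointwise, `1 ⊗ u` moves `(x, y, z)` only when `y = i`, and then only in the last coordinate.
`v ⊗ 1` changes only the middle coordinate, and since `v` fixes the whole column `(·, i)` it never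
moves that coordinate to or from `i`. So both composites agree at every point.
-/

lemma tensorOne_apply {n : ℕ} (u : Equiv.Perm (Fin n × Fin n)) (p : Fin n × Fin n × Fin n) :
    tensorOne u p = ((u (p.1, p.2.1)).1, (u (p.1, p.2.1)).2, p.2.2) := rfl

lemma oneTensor_apply {n : ℕ} (u : Equiv.Perm (Fin n × Fin n)) (p : Fin n × Fin n × Fin n) :
    oneTensor u p = (p.1, u p.2) := rfl

section

variable {n : ℕ} {i j : Fin n} {u v : Equiv.Perm (Fin n × Fin n)}

lemma memR.apply_of_fst_ne (hu : memR i u) {p : Fin n × Fin n} (hp : p.1 ≠ i) : u p = p :=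
  hu.2 p (Or.inl hp)

lemma memR.fst_apply (hu : memR i u) (p : Fin n × Fin n) : (u p).1 = p.1 := by
  by_cases hp : p.1 = i ∧ p.2 ≠ i
  · have hup : u p ∈ {q : Fin n × Fin n | q.1 = i ∧ q.2 ≠ i} :=
      hu.1 ▸ Set.mem_image_of_mem u hp
    exact hup.1.trans hp.1.symm
  · rw [hu.2 p (by tauto)]

lemma memRij.apply_mk_right (hu : memRij i j u) (x : Fin n) : u (x, j) = (x, j) := by
  by_cases hx : x = i
  · exact hx ▸ hu.2
  · exact hu.1.apply_of_fst_ne hx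

lemma memRij.snd_apply_eq_iff (hu : memRij i j u) {p : Fin n × Fin n} :
    (u p).2 = j ↔ p.2 = j := by
  obtain ⟨x, y⟩ := p
  constructor
  · intro h
    have hux : u (x, y) = u (x, j) := by
      rw [hu.apply_mk_right]
      exact Prod.ext (hu.1.fst_apply _) h
    exact congrArg Prod.snd (u.injective hux)
  · rintro (rfl : y = j)
    rw [hu.apply_mk_right]

theorem compatible_of_memR_of_memRij (hu : memR i u) (hv : memRij j i v) : Compatible u v := by
  refine Equiv.ext fun ⟨x, y, z⟩ => ?_
  simp only [Equiv.Perm.mul_apply, tensorOne_apply, oneTensor_apply]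
  by_cases hy : y = i
  · subst hy
    rw [hu.fst_apply, hv.apply_mk_right]
    exact Prod.ext rfl (Prod.ext (hu.fst_apply (y, z)).symm rfl)
  · have hvy : (v (x, y)).2 ≠ i := mt hv.snd_apply_eq_iff.1 hy
    rw [hu.apply_of_fst_ne hy, hu.apply_of_fst_ne (p := (_, z)) hvy]

end

theorem stmt_10_general (n : ℕ) (i j : Fin n)
    (u v : Equiv.Perm (Fin n × Fin n))
    (hu : memRij i j u) (hv : memRij j i v) :
    Compatible u v ∧ Compatible v u :=
  ⟨compatible_of_memR_of_memRij hu.1 hv, compatible_of_memR_of_memRij hv.1 hu⟩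

theorem stmt_10 (n : ℕ) (hn : 1 ≤ n) (i j : Fin n) (hij : i ≠ j)
    (u v : Equiv.Perm (Fin n × Fin n))
    (hu : memRij i j u) (hv : memRij j i v) :
    Compatible u v ∧ Compatible v u :=
  stmt_10_general n i j u v hu hv
end

section
/- Let m ≥ 1, let n = 2m, let C be an m-element subset of [2m] with complement B = [2m]∖C, and fix enumerations C = {c_1,…,c_m} and B = {b_1,…,b_m}. Let c_0 ∈ S([2m]^2) be the permutation mapping (c_i, y) to (c_{i+1 mod m}, y) for each y ∈ C and i ∈ [m] and fixing every other point, and let r_0 ∈ S([2m]^2) be the permutation mapping (x, b_i) to (x, b_{i+1 mod m}) for each x ∈ B and i ∈ [m] and fixing every other point. Let N be the subgroup of S([2m]^2) generated by c_0, r_0, and all permutations of [2m]² that map C × B onto itself and fix every point outside C × B. Then N is a bicompatible subgroup of S([2m]^2) and is isomorphic to S_{m²} × (ℤ/mℤ) × (ℤ/mℤ). -/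
/-- The generating set of `N(B,C)`: the two permutations `c₀`, `r₀` together
with all permutations of `[2m]²` that map `C × B` onto itself and fix every
point outside `C × B` (where `B = [2m] ∖ C`). -/
def genSetN {m : ℕ} (C : Finset (Fin (2 * m)))
    (c0 r0 : Equiv.Perm (Fin (2 * m) × Fin (2 * m))) :
    Set (Equiv.Perm (Fin (2 * m) × Fin (2 * m))) :=
  {c0, r0} ∪
    {w | (⇑w '' {p : Fin (2 * m) × Fin (2 * m) | p.1 ∈ C ∧ p.2 ∉ C} =
            {p : Fin (2 * m) × Fin (2 * m) | p.1 ∈ C ∧ p.2 ∉ C}) ∧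
         ∀ p : Fin (2 * m) × Fin (2 * m), ¬(p.1 ∈ C ∧ p.2 ∉ C) → w p = p}

/-!
Every generator of `N`, hence every element, maps `C × B` into itself, acts on the points
`(x, y)` with `y ∈ C` as `(x, y) ↦ (σ x, y)` for some `σ` preserving `C`, and on the points with
`x ∈ B` as `(x, y) ↦ (x, τ y)` for some `τ` preserving `B`. Any two permutations of this shape are
compatible: compare both sides at `(x, y, z)`, splitting on whether `y ∈ C`.

The generators `c₀`, `r₀` and the permutations of `C × B` are supported on the pairwise disjoint
blocks `C × C`, `B × B` and `C × B`, so `N` is the internal direct product of `⟨c₀⟩ ≅ ℤ/m`,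
`⟨r₀⟩ ≅ ℤ/m` (both are products of disjoint `m`-cycles) and `S(C × B) ≅ S_{m²}`.
-/

open Equiv Equiv.Perm MulAction Set
open scoped Pointwise

@[simp]
theorem tensorOne_apply_s14 {n : ℕ} (u : Perm (Fin n × Fin n)) (x : Fin n) (q : Fin n × Fin n) :
    tensorOne u (x, q) = ((u (x, q.1)).1, (u (x, q.1)).2, q.2) :=
  rfl

@[simp]
theorem oneTensor_apply_s14 {n : ℕ} (u : Perm (Fin n × Fin n)) (x y z : Fin n) :
    oneTensor u (x, y, z) = (x, u (y, z)) :=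
  rfl

section DisjointSupport

variable {α : Type*} {s t : Set α}

theorem Equiv.Perm.mem_fixingSubgroup_iff {g : Perm α} :
    g ∈ fixingSubgroup (Perm α) s ↔ ∀ x ∈ s, g x = x :=
  _root_.mem_fixingSubgroup_iff _

theorem Equiv.Perm.image_eq_of_mem_fixingSubgroup_compl {g : Perm α}
    (hg : g ∈ fixingSubgroup (Perm α) sᶜ) : ⇑g '' s = s := by
  have hstab := fixingSubgroup_le_stabilizer (Perm α) sᶜ hg
  rwa [stabilizer_compl, mem_stabilizer_iff, ← Set.image_smul] at hstab

theorem Equiv.Perm.disjoint_of_mem_fixingSubgroup_compl (hst : _root_.Disjoint s t)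
    {f g : Perm α} (hf : f ∈ fixingSubgroup (Perm α) sᶜ) (hg : g ∈ fixingSubgroup (Perm α) tᶜ) :
    f.Disjoint g := by
  intro x
  by_cases hx : x ∈ s
  · exact Or.inr (mem_fixingSubgroup_iff.mp hg x (hst.notMem_of_mem_left hx))
  · exact Or.inl (mem_fixingSubgroup_iff.mp hf x hx)

theorem Equiv.Perm.disjoint_fixingSubgroup_compl (hst : _root_.Disjoint s t) :
    _root_.Disjoint (fixingSubgroup (Perm α) sᶜ) (fixingSubgroup (Perm α) tᶜ) :=
  Subgroup.disjoint_def.mpr fun hs ht =>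
    disjoint_refl_iff.mp (disjoint_of_mem_fixingSubgroup_compl hst hs ht)

theorem Equiv.Perm.sup_le_fixingSubgroup_compl_union {H K : Subgroup (Perm α)}
    (hH : H ≤ fixingSubgroup (Perm α) sᶜ) (hK : K ≤ fixingSubgroup (Perm α) tᶜ) :
    H ⊔ K ≤ fixingSubgroup (Perm α) (s ∪ t)ᶜ :=
  sup_le (hH.trans (fixingSubgroup_antitone _ _ (compl_subset_compl.mpr subset_union_left)))
    (hK.trans (fixingSubgroup_antitone _ _ (compl_subset_compl.mpr subset_union_right)))

theorem Equiv.Perm.range_ofSubtype (s : Set α) [DecidablePred (· ∈ s)] :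
    (ofSubtype : Perm s →* Perm α).range = fixingSubgroup (Perm α) sᶜ := by
  ext g
  refine ⟨?_, fun hg => ?_⟩
  · rintro ⟨f, rfl⟩
    exact mem_fixingSubgroup_iff.mpr fun a ha => ofSubtype_apply_of_not_mem f ha
  · let e := Perm.subtypeEquivSubtypePerm (· ∈ s)
    exact ⟨e.symm ⟨g, mem_fixingSubgroup_iff.mp hg⟩, congrArg Subtype.val (e.apply_symm_apply _)⟩

theorem Equiv.Perm.nonempty_fixingSubgroup_compl_mulEquiv (s : Set α) :
    Nonempty (fixingSubgroup (Perm α) sᶜ ≃* Perm s) := by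
  classical
  exact ⟨(MulEquiv.subgroupCongr (range_ofSubtype s).symm).trans
    (MonoidHom.ofInjective ofSubtype_injective).symm⟩

end DisjointSupport

theorem Subgroup.nonempty_sup_mulEquiv_prod {G : Type*} [Group G] {H K : Subgroup G}
    (hcomm : ∀ h ∈ H, ∀ k ∈ K, Commute h k) (hHK : Disjoint H K) :
    Nonempty (↥(H ⊔ K) ≃* H × K) := by
  have comm : ∀ (h : H) (k : K), Commute (H.subtype h) (K.subtype k) :=
    fun h k => hcomm h h.2 k k.2
  have hinj : Function.Injective (H.subtype.noncommCoprod K.subtype comm) := by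
    refine (MonoidHom.noncommCoprod_injective _ _ _).mpr
      ⟨H.subtype_injective, K.subtype_injective, ?_⟩
    rwa [range_subtype, range_subtype]
  have hrange : (H.subtype.noncommCoprod K.subtype comm).range = H ⊔ K := by
    rw [MonoidHom.noncommCoprod_range, range_subtype, range_subtype]
  exact ⟨(MulEquiv.subgroupCongr hrange.symm).trans (MonoidHom.ofInjective hinj).symm⟩

theorem Equiv.Perm.nonempty_sup_mulEquiv_prod_of_disjoint {α : Type*} {s t : Set α}
    (hst : _root_.Disjoint s t) {H K : Subgroup (Perm α)}
    (hH : H ≤ fixingSubgroup (Perm α) sᶜ) (hK : K ≤ fixingSubgroup (Perm α) tᶜ) :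
    Nonempty (↥(H ⊔ K) ≃* H × K) :=
  Subgroup.nonempty_sup_mulEquiv_prod
    (fun _ hh _ hk => (disjoint_of_mem_fixingSubgroup_compl hst (hH hh) (hK hk)).commute)
    ((disjoint_fixingSubgroup_compl hst).mono hH hK)

theorem nonempty_zpowers_mulEquiv_zmod {G : Type*} [Group G] (g : G) :
    Nonempty (Subgroup.zpowers g ≃* Multiplicative (ZMod (orderOf g))) := by
  rw [← Nat.card_zpowers]
  exact ⟨(zmodCyclicMulEquiv inferInstance).symm⟩

section Cycles

open Fin.NatCast

variable {β : Type*} {m : ℕ} [NeZero m] {f : Perm β}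

theorem Equiv.Perm.pow_apply_of_apply_eq_add_one {e : Fin m → β}
    (he : ∀ i, f (e i) = e (i + 1)) (k : ℕ) (i : Fin m) : (f ^ k) (e i) = e (i + k) := by
  induction k with
  | zero => simp
  | succ k ih => rw [pow_succ', Perm.mul_apply, ih, he, Nat.cast_succ, add_assoc]

theorem Equiv.Perm.orderOf_eq_of_forall_orbit {e : Fin m → β} (he : Function.Injective e)
    (hfe : ∀ i, f (e i) = e (i + 1))
    (horbit : ∀ x, f x = x ∨
      ∃ (e' : Fin m → β) (i : Fin m), (∀ j, f (e' j) = e' (j + 1)) ∧ e' i = x) :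
    orderOf f = m := by
  rw [orderOf_eq_iff (NeZero.pos m)]
  refine ⟨Perm.ext fun x => ?_, fun k hkm hk hfk => ?_⟩
  · obtain hx | ⟨e', i, he', rfl⟩ := horbit x
    · exact pow_apply_eq_self_of_apply_eq_self hx m
    · rw [pow_apply_of_apply_eq_add_one he', Fin.natCast_self, add_zero, Perm.one_apply]
  · have h0 := pow_apply_of_apply_eq_add_one hfe k 0
    rw [hfk, Perm.one_apply, zero_add] at h0
    have hk0 : (k : Fin m) = 0 := he h0.symm
    exact hk.ne' (Nat.eq_zero_of_dvd_of_lt (Fin.natCast_eq_zero.mp hk0) hkm)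

end Cycles

section BlockSubmonoid

variable {α : Type*} {C : Set α}

def blockSubmonoid (C : Set α) : Submonoid (Perm (α × α)) where
  carrier := {v | MapsTo v (C ×ˢ Cᶜ) (C ×ˢ Cᶜ) ∧
    (∃ σ : α → α, MapsTo σ C C ∧ ∀ x, ∀ y ∈ C, v (x, y) = (σ x, y)) ∧
    (∃ τ : α → α, MapsTo τ Cᶜ Cᶜ ∧ ∀ x ∉ C, ∀ y, v (x, y) = (x, τ y))}
  one_mem' :=
    ⟨mapsTo_id _, ⟨id, mapsTo_id _, fun _ _ _ => rfl⟩, id, mapsTo_id _, fun _ _ _ => rfl⟩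
  mul_mem' := by
    rintro v u ⟨hvT, ⟨σv, hσv, hv₁⟩, τv, hτv, hv₂⟩ ⟨huT, ⟨σu, hσu, hu₁⟩, τu, hτu, hu₂⟩
    refine ⟨hvT.comp huT, ⟨σv ∘ σu, hσv.comp hσu, fun x y hy => ?_⟩,
      τv ∘ τu, hτv.comp hτu, fun x hx y => ?_⟩
    · rw [Perm.mul_apply, hu₁ x y hy, hv₁ _ y hy]; rfl
    · rw [Perm.mul_apply, hu₂ x hx y, hv₂ x hx _]; rfl

theorem compatible_of_mem_blockSubmonoid {n : ℕ} {C : Set (Fin n)} {u v : Perm (Fin n × Fin n)}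
    (hu : u ∈ blockSubmonoid C) (hv : v ∈ blockSubmonoid C) : Compatible u v := by
  obtain ⟨huT, ⟨σu, hσu, hu₁⟩, τu, -, hu₂⟩ := hu
  obtain ⟨hvT, ⟨σv, -, hv₁⟩, τv, hτv, hv₂⟩ := hv
  ext ⟨x, y, z⟩ : 1
  simp only [Perm.mul_apply, tensorOne_apply_s14, oneTensor_apply_s14]
  by_cases hy : y ∈ C
  · have hu₁y : (u (y, z)).1 ∈ C := by
      by_cases hz : z ∈ C
      · rw [hu₁ y z hz]; exact hσu hy
      · exact (huT (show (y, z) ∈ C ×ˢ Cᶜ from ⟨hy, hz⟩)).1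
    rw [hv₁ x _ hu₁y, hv₁ x y hy]
  · have hv₂y : (v (x, y)).2 ∉ C := by
      by_cases hx : x ∈ C
      · exact (hvT (show (x, y) ∈ C ×ˢ Cᶜ from ⟨hx, hy⟩)).2
      · rw [hv₂ x hx y]; exact hτv hy
    rw [hu₂ y hy z, hu₂ _ hv₂y z]

theorem mem_blockSubmonoid_of_fst {v : Perm (α × α)} (σ : α → α) (hσ : MapsTo σ C C)
    (hv : ∀ x, ∀ y ∈ C, v (x, y) = (σ x, y))
    (hfix : v ∈ fixingSubgroup (Perm (α × α)) (C ×ˢ C)ᶜ) : v ∈ blockSubmonoid C := by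
  rw [Perm.mem_fixingSubgroup_iff] at hfix
  refine ⟨fun p hp => ?_, ⟨σ, hσ, hv⟩, id, mapsTo_id _, fun x hx y => hfix (x, y) fun h => hx h.1⟩
  rwa [hfix p fun h => hp.2 h.2]

theorem mem_blockSubmonoid_of_snd {v : Perm (α × α)} (τ : α → α) (hτ : MapsTo τ Cᶜ Cᶜ)
    (hv : ∀ x ∉ C, ∀ y, v (x, y) = (x, τ y))
    (hfix : v ∈ fixingSubgroup (Perm (α × α)) (Cᶜ ×ˢ Cᶜ)ᶜ) : v ∈ blockSubmonoid C := by
  rw [Perm.mem_fixingSubgroup_iff] at hfix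
  refine ⟨fun p hp => ?_, ⟨id, mapsTo_id _, fun x y hy => hfix (x, y) fun h => h.2 hy⟩, τ, hτ, hv⟩
  rwa [hfix p fun h => h.1 hp.1]

theorem mem_blockSubmonoid_of_mem_fixingSubgroup {v : Perm (α × α)}
    (hfix : v ∈ fixingSubgroup (Perm (α × α)) (C ×ˢ Cᶜ)ᶜ) : v ∈ blockSubmonoid C := by
  refine ⟨mapsTo_iff_image_subset.mpr (Perm.image_eq_of_mem_fixingSubgroup_compl hfix).subset,
    ?_, ?_⟩ <;> rw [Perm.mem_fixingSubgroup_iff] at hfix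
  · exact ⟨id, mapsTo_id _, fun x y hy => hfix (x, y) fun h => h.2 hy⟩
  · exact ⟨id, mapsTo_id _, fun x hx y => hfix (x, y) fun h => hx h.1⟩

end BlockSubmonoid

section Generators

variable {m : ℕ} [NeZero m] {C : Finset (Fin (2 * m))} {c0 r0 : Perm (Fin (2 * m) × Fin (2 * m))}

theorem mem_blockSubmonoid_of_fst_cycle {c : Fin m → Fin (2 * m)} (hcC : ∀ i, c i ∈ C)
    (hcS : ∀ x ∈ C, ∃ i, c i = x)
    (hc0 : ∀ (i : Fin m) (y : Fin (2 * m)), y ∈ C → c0 (c i, y) = (c (i + 1), y))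
    (hc0F : c0 ∈ fixingSubgroup (Perm _) ((C : Set (Fin (2 * m))) ×ˢ C)ᶜ) :
    c0 ∈ blockSubmonoid (C : Set (Fin (2 * m))) := by
  have hfix := Perm.mem_fixingSubgroup_iff.mp hc0F
  refine mem_blockSubmonoid_of_fst (fun x => (c0 (x, c 0)).1) (fun x hx => ?_) (fun x y hy => ?_)
    hc0F
  · obtain ⟨i, rfl⟩ := hcS x hx
    simp only [hc0 i _ (hcC 0), Finset.mem_coe, hcC]
  · by_cases hx : x ∈ C
    · obtain ⟨i, rfl⟩ := hcS x hx
      rw [hc0 i y hy, hc0 i _ (hcC 0)]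
    · rw [hfix (x, y) fun h => hx h.1, hfix (x, c 0) fun h => hx h.1]

theorem mem_blockSubmonoid_of_snd_cycle {b : Fin m → Fin (2 * m)} (hbB : ∀ i, b i ∉ C)
    (hbS : ∀ x ∉ C, ∃ i, b i = x)
    (hr0 : ∀ (x : Fin (2 * m)) (i : Fin m), x ∉ C → r0 (x, b i) = (x, b (i + 1)))
    (hr0F : r0 ∈ fixingSubgroup (Perm _)
      ((C : Set (Fin (2 * m)))ᶜ ×ˢ (C : Set (Fin (2 * m)))ᶜ)ᶜ) :
    r0 ∈ blockSubmonoid (C : Set (Fin (2 * m))) := by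
  have hfix := Perm.mem_fixingSubgroup_iff.mp hr0F
  refine mem_blockSubmonoid_of_snd (fun y => (r0 (b 0, y)).2) (fun y hy => ?_) (fun x hx y => ?_)
    hr0F
  · obtain ⟨i, rfl⟩ := hbS y hy
    simp only [hr0 _ i (hbB 0), mem_compl_iff, Finset.mem_coe, hbB, not_false_eq_true]
  · by_cases hy : y ∈ C
    · rw [hfix (x, y) fun h => h.2 hy, hfix (b 0, y) fun h => h.2 hy]
    · obtain ⟨i, rfl⟩ := hbS y hy
      rw [hr0 x i hx, hr0 _ i (hbB 0)]

theorem orderOf_eq_of_fst_cycle {c : Fin m → Fin (2 * m)} (hc : Function.Injective c)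
    (hcC : ∀ i, c i ∈ C) (hcS : ∀ x ∈ C, ∃ i, c i = x)
    (hc0 : ∀ (i : Fin m) (y : Fin (2 * m)), y ∈ C → c0 (c i, y) = (c (i + 1), y))
    (hc0F : c0 ∈ fixingSubgroup (Perm _) ((C : Set (Fin (2 * m))) ×ˢ C)ᶜ) :
    orderOf c0 = m := by
  refine orderOf_eq_of_forall_orbit (e := fun i => (c i, c 0))
    (fun i j h => hc (congrArg Prod.fst h)) (fun i => hc0 i _ (hcC 0)) ?_
  rintro ⟨x, y⟩
  by_cases h : x ∈ C ∧ y ∈ C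
  · obtain ⟨i, rfl⟩ := hcS x h.1
    exact Or.inr ⟨fun j => (c j, y), i, fun j => hc0 j y h.2, rfl⟩
  · exact Or.inl (Perm.mem_fixingSubgroup_iff.mp hc0F _ h)

theorem orderOf_eq_of_snd_cycle {b : Fin m → Fin (2 * m)} (hb : Function.Injective b)
    (hbB : ∀ i, b i ∉ C) (hbS : ∀ x ∉ C, ∃ i, b i = x)
    (hr0 : ∀ (x : Fin (2 * m)) (i : Fin m), x ∉ C → r0 (x, b i) = (x, b (i + 1)))
    (hr0F : r0 ∈ fixingSubgroup (Perm _)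
      ((C : Set (Fin (2 * m)))ᶜ ×ˢ (C : Set (Fin (2 * m)))ᶜ)ᶜ) :
    orderOf r0 = m := by
  refine orderOf_eq_of_forall_orbit (e := fun i => (b 0, b i))
    (fun i j h => hb (congrArg Prod.snd h)) (fun i => hr0 _ i (hbB 0)) ?_
  rintro ⟨x, y⟩
  by_cases h : x ∉ C ∧ y ∉ C
  · obtain ⟨i, rfl⟩ := hbS y h.2
    exact Or.inr ⟨fun j => (x, b j), i, fun j => hr0 x j h.1, rfl⟩
  · exact Or.inl (Perm.mem_fixingSubgroup_iff.mp hr0F _ h)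

end Generators

theorem closure_genSetN_le_blockSubmonoid {m : ℕ} {C : Finset (Fin (2 * m))}
    {c0 r0 : Perm (Fin (2 * m) × Fin (2 * m))}
    (hc0 : c0 ∈ blockSubmonoid (C : Set (Fin (2 * m))))
    (hr0 : r0 ∈ blockSubmonoid (C : Set (Fin (2 * m)))) :
    (Subgroup.closure (genSetN C c0 r0)).toSubmonoid ≤ blockSubmonoid (C : Set (Fin (2 * m))) := by
  rw [Subgroup.closure_toSubmonoid_of_finite, Submonoid.closure_le]
  rintro g ((rfl | rfl) | ⟨-, hg⟩)
  · exact hc0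
  · exact hr0
  · exact mem_blockSubmonoid_of_mem_fixingSubgroup (Perm.mem_fixingSubgroup_iff.mpr hg)

theorem closure_genSetN {m : ℕ} (C : Finset (Fin (2 * m)))
    (c0 r0 : Perm (Fin (2 * m) × Fin (2 * m))) :
    Subgroup.closure (genSetN C c0 r0) = Subgroup.zpowers c0 ⊔ Subgroup.zpowers r0 ⊔
      fixingSubgroup (Perm _) ((C : Set (Fin (2 * m))) ×ˢ (C : Set (Fin (2 * m)))ᶜ)ᶜ := by
  have hgen : genSetN C c0 r0 = ({c0} ∪ {r0}) ∪
      (fixingSubgroup (Perm (Fin (2 * m) × Fin (2 * m)))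
        ((C : Set (Fin (2 * m))) ×ˢ (C : Set (Fin (2 * m)))ᶜ)ᶜ : Set (Perm _)) := by
    ext g
    refine or_congr (by rw [Set.insert_eq]) ⟨fun h => Perm.mem_fixingSubgroup_iff.mpr h.2,
      fun h => ⟨Perm.image_eq_of_mem_fixingSubgroup_compl h, Perm.mem_fixingSubgroup_iff.mp h⟩⟩
  rw [hgen, Subgroup.closure_union, Subgroup.closure_union, ← Subgroup.zpowers_eq_closure,
    ← Subgroup.zpowers_eq_closure, Subgroup.closure_eq]

theorem Finset.natCard_coe_prod_compl {α : Type*} [Fintype α] (C : Finset α) :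
    Nat.card ↥((C : Set α) ×ˢ (C : Set α)ᶜ) = C.card * (Fintype.card α - C.card) := by
  classical
  rw [Nat.card_congr (Equiv.Set.prod _ _), Nat.card_prod, ← Finset.coe_compl, Nat.card_coe_set_eq,
    Nat.card_coe_set_eq, Set.ncard_coe_finset, Set.ncard_coe_finset, Finset.card_compl]

theorem nonempty_closure_genSetN_mulEquiv {m : ℕ} {C : Finset (Fin (2 * m))} (hC : C.card = m)
    {c0 r0 : Perm (Fin (2 * m) × Fin (2 * m))}
    (hc0F : c0 ∈ fixingSubgroup (Perm _) ((C : Set (Fin (2 * m))) ×ˢ C)ᶜ)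
    (hr0F : r0 ∈ fixingSubgroup (Perm _)
      ((C : Set (Fin (2 * m)))ᶜ ×ˢ (C : Set (Fin (2 * m)))ᶜ)ᶜ)
    (hc0ord : orderOf c0 = m) (hr0ord : orderOf r0 = m) :
    Nonempty (Subgroup.closure (genSetN C c0 r0) ≃*
      Perm (Fin (m * m)) × Multiplicative (ZMod m) × Multiplicative (ZMod m)) := by
  set T : Set (Fin (2 * m) × Fin (2 * m)) := (C : Set (Fin (2 * m))) ×ˢ (C : Set (Fin (2 * m)))ᶜ
  have hT : Nat.card T = m * m := by
    rw [Finset.natCard_coe_prod_compl, hC, Fintype.card_fin, two_mul, Nat.add_sub_cancel]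
  obtain ⟨ec⟩ := nonempty_zpowers_mulEquiv_zmod c0
  obtain ⟨er⟩ := nonempty_zpowers_mulEquiv_zmod r0
  rw [hc0ord] at ec
  rw [hr0ord] at er
  obtain ⟨eT⟩ := Perm.nonempty_fixingSubgroup_compl_mulEquiv T
  have hc0Z := Subgroup.zpowers_le.mpr hc0F
  have hr0Z := Subgroup.zpowers_le.mpr hr0F
  obtain ⟨e₁⟩ := Perm.nonempty_sup_mulEquiv_prod_of_disjoint
    (disjoint_prod.mpr (Or.inl disjoint_compl_right)) hc0Z hr0Z
  obtain ⟨e₂⟩ := Perm.nonempty_sup_mulEquiv_prod_of_disjoint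
    (disjoint_union_left.mpr ⟨disjoint_prod.mpr (Or.inr disjoint_compl_right),
      disjoint_prod.mpr (Or.inl disjoint_compl_left)⟩)
    (Perm.sup_le_fixingSubgroup_compl_union hc0Z hr0Z) (le_refl (fixingSubgroup _ Tᶜ))
  rw [closure_genSetN]
  exact ⟨(e₂.trans ((e₁.trans (ec.prodCongr er)).prodCongr
    (eT.trans (Finite.equivFinOfCardEq hT).permCongrHom))).trans MulEquiv.prodComm⟩

theorem stmt_14_general (m : ℕ) [NeZero m]
    (C : Finset (Fin (2 * m))) (hC : C.card = m)
    (c b : Fin m → Fin (2 * m))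
    (hc : Function.Injective c) (hcC : ∀ i, c i ∈ C) (hcS : ∀ x ∈ C, ∃ i, c i = x)
    (hb : Function.Injective b) (hbB : ∀ i, b i ∉ C) (hbS : ∀ x ∉ C, ∃ i, b i = x)
    (c0 r0 : Equiv.Perm (Fin (2 * m) × Fin (2 * m)))
    (hc0 : ∀ (i : Fin m) (y : Fin (2 * m)), y ∈ C → c0 (c i, y) = (c (i + 1), y))
    (hc0fix : ∀ p : Fin (2 * m) × Fin (2 * m), (p.1 ∉ C ∨ p.2 ∉ C) → c0 p = p)
    (hr0 : ∀ (x : Fin (2 * m)) (i : Fin m), x ∉ C → r0 (x, b i) = (x, b (i + 1)))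
    (hr0fix : ∀ p : Fin (2 * m) × Fin (2 * m), (p.1 ∈ C ∨ p.2 ∈ C) → r0 p = p) :
    (∀ u ∈ Subgroup.closure (genSetN C c0 r0),
      ∀ v ∈ Subgroup.closure (genSetN C c0 r0),
        Compatible u v ∧ Compatible v u) ∧
    Nonempty
      ((Subgroup.closure (genSetN C c0 r0) :
          Subgroup (Equiv.Perm (Fin (2 * m) × Fin (2 * m)))) ≃*
        (Equiv.Perm (Fin (m * m)) ×
          Multiplicative (ZMod m) × Multiplicative (ZMod m))) := by
  have hc0F : c0 ∈ fixingSubgroup (Perm _) ((C : Set (Fin (2 * m))) ×ˢ C)ᶜ :=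
    Perm.mem_fixingSubgroup_iff.mpr fun p hp => hc0fix p (not_and_or.mp hp)
  have hr0F : r0 ∈ fixingSubgroup (Perm _)
      ((C : Set (Fin (2 * m)))ᶜ ×ˢ (C : Set (Fin (2 * m)))ᶜ)ᶜ :=
    Perm.mem_fixingSubgroup_iff.mpr fun p hp =>
      hr0fix p (or_iff_not_imp_left.mpr (by simpa using hp))
  have hN := closure_genSetN_le_blockSubmonoid (mem_blockSubmonoid_of_fst_cycle hcC hcS hc0 hc0F)
    (mem_blockSubmonoid_of_snd_cycle hbB hbS hr0 hr0F)
  refine ⟨fun u hu v hv => ⟨compatible_of_mem_blockSubmonoid (hN hu) (hN hv),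
    compatible_of_mem_blockSubmonoid (hN hv) (hN hu)⟩, ?_⟩
  exact nonempty_closure_genSetN_mulEquiv hC hc0F hr0F
    (orderOf_eq_of_fst_cycle hc hcC hcS hc0 hc0F) (orderOf_eq_of_snd_cycle hb hbB hbS hr0 hr0F)

theorem stmt_14 (m : ℕ) (hm : 1 ≤ m) [NeZero m]
    (C : Finset (Fin (2 * m))) (hC : C.card = m)
    (c b : Fin m → Fin (2 * m))
    (hc : Function.Injective c) (hcC : ∀ i, c i ∈ C) (hcS : ∀ x ∈ C, ∃ i, c i = x)
    (hb : Function.Injective b) (hbB : ∀ i, b i ∉ C) (hbS : ∀ x ∉ C, ∃ i, b i = x)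
    (c0 r0 : Equiv.Perm (Fin (2 * m) × Fin (2 * m)))
    (hc0 : ∀ (i : Fin m) (y : Fin (2 * m)), y ∈ C → c0 (c i, y) = (c (i + 1), y))
    (hc0fix : ∀ p : Fin (2 * m) × Fin (2 * m), (p.1 ∉ C ∨ p.2 ∉ C) → c0 p = p)
    (hr0 : ∀ (x : Fin (2 * m)) (i : Fin m), x ∉ C → r0 (x, b i) = (x, b (i + 1)))
    (hr0fix : ∀ p : Fin (2 * m) × Fin (2 * m), (p.1 ∈ C ∨ p.2 ∈ C) → r0 p = p) :
    (∀ u ∈ Subgroup.closure (genSetN C c0 r0),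
      ∀ v ∈ Subgroup.closure (genSetN C c0 r0),
        Compatible u v ∧ Compatible v u) ∧
    Nonempty
      ((Subgroup.closure (genSetN C c0 r0) :
          Subgroup (Equiv.Perm (Fin (2 * m) × Fin (2 * m)))) ≃*
        (Equiv.Perm (Fin (m * m)) ×
          Multiplicative (ZMod m) × Multiplicative (ZMod m))) :=
  stmt_14_general m C hC c b hc hcC hcS hb hbB hbS c0 r0 hc0 hc0fix hr0 hr0fix
end
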